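/- Let Λ_P be a Penrose model set and k ∈ ℕ. Then for every set U ⊂ S¹ of 1 + ⌊log₂ k⌋ pairwise non-parallel ℤ[ζ₅]-directions, the class 𝓕_{≤k}(Λ_P) of all finite subsets of Λ_P of cardinality at most k is not determined by the X-rays in the directions of U: there exist distinct sets F, F' ⊂ Λ_P with card(F) ≤ k, card(F') ≤ k, and X_uF = X_uF' for all u ∈ U. -/

import Mathlib

open scoped Pointwise

noncomputable section

instance : TopologicalSpace (ZMod 5) := ⊥
instance : DiscreteTopology (ZMod 5) := ⟨rfl⟩

/-- The primitive 5th root of unity ζ₅ = exp(2πi/5). -/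
def zeta5 : ℂ := Complex.exp (2 * Real.pi * Complex.I / 5)

/-- The ring of cyclotomic integers ℤ[ζ₅], as the set of ℤ-combinations of 1, ζ₅, ζ₅², ζ₅³. -/
def Zzeta5 : Set ℂ := {z | ∃ a : Fin 4 → ℤ, z = ∑ j : Fin 4, (a j : ℂ) * zeta5 ^ (j : ℕ)}

/-- The (unique) integer coefficients of an element of ℤ[ζ₅] w.r.t. the basis 1, ζ₅, ζ₅², ζ₅³. -/
def coeffs (z : ℂ) : Fin 4 → ℤ :=
  open Classical in
  if h : z ∈ Zzeta5 then h.choose else 0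

/-- The star map z ↦ (σ₂(z), Σ aⱼ(z) mod 5), with σ₂ the Galois automorphism ζ₅ ↦ ζ₅². -/
def starMap (z : ℂ) : ℂ × ZMod 5 :=
  (∑ j : Fin 4, (coeffs z j : ℂ) * zeta5 ^ (2 * (j : ℕ)),
   ∑ j : Fin 4, ((coeffs z j : ℤ) : ZMod 5))

/-- The regular pentagon P: the convex hull of the 5th roots of unity. -/
def pent : Set ℂ := convexHull ℝ {z : ℂ | z ^ 5 = 1}

/-- The golden ratio τ = (1+√5)/2. -/
def tauR : ℝ := (1 + Real.sqrt 5) / 2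

/-- The Penrose window W_P ⊂ ℝ² × ℤ/5ℤ. -/
def WP : Set (ℂ × ZMod 5) :=
  (pent ×ˢ ({1} : Set (ZMod 5))) ∪ ((-pent) ×ˢ ({2} : Set (ZMod 5))) ∪
    ((tauR • pent) ×ˢ ({3} : Set (ZMod 5))) ∪ ((-(tauR • pent)) ×ˢ ({4} : Set (ZMod 5)))

/-- The shifted window W_P^u = (u, 0) + W_P. -/
def WPu (u : ℂ) : Set (ℂ × ZMod 5) := (fun p => ((u, (0 : ZMod 5)) + p)) '' WP

/-- The model set Λ_P^u = {z ∈ ℤ[ζ₅] : z⋆ ∈ W_P^u}. -/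
def LambdaPu (u : ℂ) : Set ℂ := {z | z ∈ Zzeta5 ∧ starMap z ∈ WPu u}

/-- Λ_P^u is generic if the boundary of W_P^u contains no point of ℤ[ζ₅]⋆. -/
def IsGeneric (u : ℂ) : Prop := ∀ z ∈ Zzeta5, starMap z ∉ frontier (WPu u)

/-- A Penrose model set: a translate t + Λ_P^u of a generic Λ_P^u. -/
def IsPMS (Λ : Set ℂ) : Prop := ∃ t u : ℂ, IsGeneric u ∧ Λ = (fun z => t + z) '' LambdaPu u

/-- v is parallel to u. -/
def Par (u v : ℂ) : Prop := ∃ r : ℝ, r ≠ 0 ∧ v = r • u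

/-- A ℤ[ζ₅]-direction: a direction parallel to a nonzero element of ℤ[ζ₅]. -/
def IsZ5Direction (u : ℂ) : Prop := ∃ z ∈ Zzeta5, z ≠ 0 ∧ Par u z

/-- The line through p in direction u. -/
def line (u p : ℂ) : Set ℂ := {x | ∃ t : ℝ, x = p + t • u}

/-- The X-ray of F in direction u, as a function of the base point of the line. -/
def Xray (u : ℂ) (F : Set ℂ) : ℂ → ℕ := fun p => (F ∩ line u p).ncard

/-- A convex subset C of Λ: a finite subset with C = conv(C) ∩ Λ. -/
def IsConvexSubset (Λ C : Set ℂ) : Prop :=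
  C.Finite ∧ C ⊆ Λ ∧ C = convexHull ℝ C ∩ Λ

/-!
Let `u₁, …, u_d` be the directions, `d = 1 + ⌊log₂ k⌋`, and pick `vᵢ ∈ ℤ[ζ₅]` parallel to `uᵢ`.
The element `ζ₅² + ζ₅³ = -τ` is real and its Galois conjugate `ζ₅⁴ + ζ₅ = τ⁻¹` lies in `(0, 1)`, so
`wᵢ = 5 Mᵢ (ζ₅² + ζ₅³)ⁿ vᵢ` is still parallel to `uᵢ`, has star image as small as we like for large
`n`, and has vanishing `ℤ/5ℤ`-coordinate; the integers `Mᵢ` make the lengths `‖wᵢ‖` superincreasing,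
so that the `2ᵈ` subset sums of the `wᵢ` are pairwise distinct. Since the star map of `ℤ[ζ₅]` is
dense, some `z₀` has its star image deep inside the window, and then every `z₀ + ∑_{i ∈ S} wᵢ` lies
in the model set. Splitting these points according to the parity of `|S|` gives two distinct sets of
`2ᵈ⁻¹ ≤ k` points, and toggling `i ∈ S` is a bijection between their points on any line parallel to
`uᵢ`, so their X-rays in all directions `uᵢ` agree.
-/

open Polynomial hiding coeffs
open Finset Real Complex ComplexConjugate

section Parity

variable {ι : Type*} [DecidableEq ι]

lemma symmDiff_singleton_eq (S : Finset ι) (i : ι) :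
    symmDiff S {i} = if i ∈ S then S.erase i else insert i S := by
  split_ifs with h <;> ext j <;> by_cases hj : j = i <;> simp_all [mem_symmDiff]

lemma even_card_symmDiff_singleton_iff (S : Finset ι) (i : ι) :
    Even (symmDiff S {i}).card ↔ ¬ Even S.card := by
  rw [symmDiff_singleton_eq]
  split_ifs with h
  · rw [← card_erase_add_one h, Nat.even_add_one, not_not]
  · rw [card_insert_of_notMem h, Nat.even_add_one]

lemma ncard_even_eq_ncard_odd (i : ι) {A : Set (Finset ι)}
    (hA : ∀ S, symmDiff S {i} ∈ A ↔ S ∈ A) :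
    {S ∈ A | Even S.card}.ncard = {S ∈ A | Odd S.card}.ncard := by
  have hinv : Function.Involutive (symmDiff · ({i} : Finset ι)) :=
    fun S => symmDiff_symmDiff_cancel_right {i} S
  have hodd : {S ∈ A | Odd S.card} = (symmDiff · {i}) ⁻¹' {S ∈ A | Even S.card} := by
    ext S
    simp [hA, even_card_symmDiff_singleton_iff, Nat.not_even_iff_odd]
  rw [hodd, Set.ncard_preimage_of_injective_subset_range hinv.injective
    (by rw [hinv.surjective.range_eq]; exact Set.subset_univ _)]

lemma ncard_setOf_even_card_eq_odd [Nonempty ι] :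
    {S : Finset ι | Even S.card}.ncard = {S : Finset ι | Odd S.card}.ncard := by
  obtain ⟨i⟩ := ‹Nonempty ι›
  simpa using ncard_even_eq_ncard_odd (A := Set.univ) i (by simp)

lemma ncard_setOf_even_card [Fintype ι] [Nonempty ι] :
    {S : Finset ι | Even S.card}.ncard = 2 ^ (Fintype.card ι - 1) := by
  have hunion := Set.ncard_union_eq (s := {S : Finset ι | Even S.card}) (t := {S | Odd S.card})
    (Set.disjoint_left.2 fun S he ho => Nat.not_odd_iff_even.2 he ho)
  have hall : {S : Finset ι | Even S.card} ∪ {S | Odd S.card} = Set.univ := by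
    ext S; simp [Nat.even_or_odd]
  rw [← ncard_setOf_even_card_eq_odd, hall, Set.ncard_univ, Nat.card_eq_fintype_card,
    Fintype.card_finset] at hunion
  obtain ⟨m, hm⟩ := Nat.exists_eq_add_one_of_ne_zero (Fintype.card_ne_zero (α := ι))
  rw [hm, pow_succ] at hunion
  rw [hm, Nat.add_sub_cancel]
  omega

end Parity

section SubsetSums

variable {ι V : Type*} [AddCommGroup V]

def subsetSums (w : ι → V) (P : ℕ → Prop) : Set V :=
  (fun S : Finset ι => ∑ i ∈ S, w i) '' {S | P S.card}

lemma finite_subsetSums [Finite ι] (w : ι → V) (P : ℕ → Prop) : (subsetSums w P).Finite :=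
  (Set.toFinite _).image _

lemma zero_mem_subsetSums_even (w : ι → V) : (0 : V) ∈ subsetSums w Even :=
  ⟨∅, by simp⟩

lemma zero_notMem_subsetSums_odd {w : ι → V}
    (hw : Function.Injective fun S : Finset ι => ∑ i ∈ S, w i) : (0 : V) ∉ subsetSums w Odd := by
  rintro ⟨S, hS, h0⟩
  obtain rfl : S = ∅ := hw (by simpa using h0)
  simp at hS

variable [DecidableEq ι]

lemma sum_symmDiff_singleton (w : ι → V) (S : Finset ι) (i : ι) :
    ∑ j ∈ symmDiff S {i}, w j = if i ∈ S then ∑ j ∈ S, w j - w i else ∑ j ∈ S, w j + w i := by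
  rw [symmDiff_singleton_eq]
  split_ifs with h
  · exact sum_erase_eq_sub h
  · rw [sum_insert h, add_comm]

lemma ncard_subsetSums_even_inter_eq {w : ι → V}
    (hw : Function.Injective fun S : Finset ι => ∑ i ∈ S, w i) {L : Set V} (i : ι)
    (hL : ∀ x, x + w i ∈ L ↔ x ∈ L) :
    (subsetSums w Even ∩ L).ncard = (subsetSums w Odd ∩ L).ncard := by
  have hA : ∀ S : Finset ι, ∑ j ∈ symmDiff S {i}, w j ∈ L ↔ ∑ j ∈ S, w j ∈ L := by
    intro S
    rw [sum_symmDiff_singleton]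
    split_ifs
    · rw [← hL, sub_add_cancel]
    · exact hL _
  simp only [subsetSums, ← Set.image_inter_preimage, Set.ncard_image_of_injective _ hw]
  convert ncard_even_eq_ncard_odd i (A := (fun S => ∑ j ∈ S, w j) ⁻¹' L) hA using 2 <;>
    ext S <;> simp [and_comm]

end SubsetSums

section Superincreasing

variable {ι E : Type*} [LinearOrder ι] [LocallyFiniteOrderBot ι] [SeminormedAddCommGroup E]

lemma sum_ne_sum_of_superincreasing {w : ι → E} (hw : ∀ i, ∑ j ∈ Iio i, ‖w j‖ < ‖w i‖)
    {A B : Finset ι} (hAB : Disjoint A B) {m : ι} (hm : m ∈ A) (hle : ∀ j ∈ A ∪ B, j ≤ m) :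
    ∑ j ∈ A, w j ≠ ∑ j ∈ B, w j := by
  intro hsum
  have hsub : A.erase m ∪ B ⊆ Iio m := by
    intro j hj
    rw [mem_Iio]
    refine lt_of_le_of_ne (hle j (union_subset_union (erase_subset m A) subset_rfl hj)) ?_
    rintro rfl
    rcases mem_union.1 hj with h | h
    · exact notMem_erase j A h
    · exact disjoint_left.1 hAB hm h
  have hwm : w m = ∑ j ∈ B, w j - ∑ j ∈ A.erase m, w j := by
    rw [← hsum, ← add_sum_erase A w hm, add_sub_cancel_right]
  have hwm_le : ‖w m‖ ≤ ∑ j ∈ Iio m, ‖w j‖ := calc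
    ‖w m‖ ≤ ∑ j ∈ B, ‖w j‖ + ∑ j ∈ A.erase m, ‖w j‖ := by
      rw [hwm]
      exact (norm_sub_le _ _).trans (add_le_add (norm_sum_le _ _) (norm_sum_le _ _))
    _ = ∑ j ∈ A.erase m ∪ B, ‖w j‖ := by
      rw [sum_union ((disjoint_of_subset_left (erase_subset m A) hAB)), add_comm]
    _ ≤ ∑ j ∈ Iio m, ‖w j‖ := sum_le_sum_of_subset_of_nonneg hsub fun _ _ _ => norm_nonneg _
  exact absurd (hw m) (not_lt.2 hwm_le)

lemma sum_injective_of_superincreasing {w : ι → E} (hw : ∀ i, ∑ j ∈ Iio i, ‖w j‖ < ‖w i‖) :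
    Function.Injective fun S : Finset ι => ∑ i ∈ S, w i := by
  intro S T hST
  by_contra hne
  have hD : (S \ T ∪ T \ S).Nonempty := by
    rw [nonempty_iff_ne_empty, Ne, union_eq_empty, sdiff_eq_empty_iff_subset,
      sdiff_eq_empty_iff_subset]
    exact fun h => hne (Subset.antisymm h.1 h.2)
  have hle : ∀ j ∈ S \ T ∪ T \ S, j ≤ (S \ T ∪ T \ S).max' hD := fun j hj => le_max' _ j hj
  have hsdiff : ∑ j ∈ S \ T, w j = ∑ j ∈ T \ S, w j := by
    rw [← sub_eq_zero, sum_sdiff_sub_sum_sdiff, sub_eq_zero]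
    exact hST
  rcases mem_union.1 (max'_mem _ hD) with hm | hm
  · exact sum_ne_sum_of_superincreasing hw disjoint_sdiff_sdiff hm hle hsdiff
  · exact sum_ne_sum_of_superincreasing hw disjoint_sdiff_sdiff.symm hm
      (fun j hj => hle j (mem_union.2 (mem_union.1 hj).symm)) hsdiff.symm

end Superincreasing

lemma exists_nat_superincreasing {d : ℕ} {a : Fin d → ℝ} (ha : ∀ i, 0 < a i) :
    ∃ M : Fin d → ℕ, ∀ i, ∑ j ∈ Iio i, (M j : ℝ) * a j < M i * a i := by
  set A := ∑ j, a j
  have hA : 0 ≤ A := sum_nonneg fun j _ => (ha j).le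
  obtain ⟨K, hK⟩ := exists_nat_gt (∑ i, A / a i)
  refine ⟨fun i => K ^ (i : ℕ), fun i => ?_⟩
  have hAK : A < K * a i := by
    rw [← div_lt_iff₀ (ha i)]
    exact (single_le_sum (f := fun i => A / a i) (fun j _ => div_nonneg hA (ha j).le)
      (mem_univ i)).trans_lt hK
  have hK0 : (0 : ℝ) < K := pos_of_mul_pos_left (hA.trans_lt hAK) (ha i).le
  have hK1 : (1 : ℝ) ≤ K := Nat.one_le_cast.2 (Nat.cast_pos.1 hK0)
  refine lt_of_mul_lt_mul_left ?_ hK0.le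
  push_cast
  calc (K : ℝ) * ∑ j ∈ Iio i, (K : ℝ) ^ (j : ℕ) * a j
      = ∑ j ∈ Iio i, (K : ℝ) ^ ((j : ℕ) + 1) * a j := by
        rw [mul_sum]; exact sum_congr rfl fun j _ => by ring
    _ ≤ ∑ j ∈ Iio i, (K : ℝ) ^ (i : ℕ) * a j := by
        refine sum_le_sum fun j hj => mul_le_mul_of_nonneg_right ?_ (ha j).le
        exact pow_le_pow_right₀ hK1 (mem_Iio.1 hj)
    _ ≤ (K : ℝ) ^ (i : ℕ) * A := by
        rw [← mul_sum]
        exact mul_le_mul_of_nonneg_left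
          (sum_le_sum_of_subset_of_nonneg (subset_univ _) fun j _ _ => (ha j).le) (by positivity)
    _ < (K : ℝ) ^ (i : ℕ) * (K * a i) := mul_lt_mul_of_pos_left hAK (by positivity)
    _ = K * (K ^ (i : ℕ) * a i) := by ring

lemma isPrimitiveRoot_zeta5 : IsPrimitiveRoot zeta5 5 := by
  simpa [zeta5] using Complex.isPrimitiveRoot_exp 5 (by norm_num)

lemma aeval_cyclotomic_eq_zero {A : Type*} [CommRing A] [IsDomain A] {μ : A} {n : ℕ}
    (hn : 0 < n) (hμ : IsPrimitiveRoot μ n) : aeval μ (cyclotomic n ℤ) = 0 := by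
  rw [aeval_def, eval₂_eq_eval_map, map_cyclotomic]
  exact hμ.isRoot_cyclotomic hn

lemma aeval_zeta5_cyclotomic_five : aeval zeta5 (cyclotomic 5 ℤ) = 0 :=
  aeval_cyclotomic_eq_zero (by norm_num) isPrimitiveRoot_zeta5

lemma aeval_one_cyclotomic_five : aeval (1 : ZMod 5) (cyclotomic 5 ℤ) = 0 := by
  have : Fact (Nat.Prime 5) := ⟨by norm_num⟩
  rw [aeval_def, eval₂_eq_eval_map, map_cyclotomic, eval_one_cyclotomic_prime]
  rfl

lemma aeval_eq_sum_coeff_mul_pow {A : Type*} [CommRing A] {r : ℤ[X]} {n : ℕ}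
    (hr : r.natDegree < n) (x : A) : aeval x r = ∑ j : Fin n, (r.coeff j : A) * x ^ (j : ℕ) := by
  conv_lhs => rw [r.as_sum_range' n hr]
  simp [Fin.sum_univ_eq_sum_range (fun j => (r.coeff j : A) * x ^ j)]

lemma natDegree_modByMonic_cyclotomic_five_lt (p : ℤ[X]) :
    (p %ₘ cyclotomic 5 ℤ).natDegree < 4 := by
  have hdeg : (cyclotomic 5 ℤ).natDegree = 4 := by
    rw [natDegree_cyclotomic]; decide
  have hne : cyclotomic 5 ℤ ≠ 1 := fun h => by simp [h] at hdeg
  simpa [hdeg] using natDegree_modByMonic_lt p (cyclotomic.monic 5 ℤ) hne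

lemma sum_mul_zeta5_pow_injective :
    Function.Injective fun a : Fin 4 → ℤ => ∑ j : Fin 4, (a j : ℂ) * zeta5 ^ (j : ℕ) := by
  intro a b hab
  set q : ℤ[X] := ∑ j : Fin 4, C (a j - b j) * X ^ (j : ℕ)
  have hq : aeval zeta5 q = 0 := by
    simpa [q, sub_mul, sum_sub_distrib, sub_eq_zero] using hab
  have hdeg : q.degree < 4 := by
    refine (degree_sum_le _ _).trans_lt ((Finset.sup_lt_iff (by decide)).2 fun j _ => ?_)
    exact (degree_C_mul_X_pow_le _ _).trans_lt (by exact_mod_cast j.isLt)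
  have hint := isPrimitiveRoot_zeta5.isIntegral (by norm_num)
  have hq0 : q = 0 := by
    refine eq_zero_of_dvd_of_degree_lt (minpoly.isIntegrallyClosed_dvd hint hq) ?_
    rw [← cyclotomic_eq_minpoly isPrimitiveRoot_zeta5 (by norm_num), degree_cyclotomic]
    exact hdeg.trans_eq (by decide)
  funext i
  have := congrArg (coeff · (i : ℕ)) hq0
  simp only [q, finsetSum_coeff, coeff_C_mul_X_pow, Fin.val_inj, Finset.sum_ite_eq,
    Finset.mem_univ, if_true, coeff_zero] at this
  omega

lemma coeffs_sum_mul_zeta5_pow (a : Fin 4 → ℤ) :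
    coeffs (∑ j : Fin 4, (a j : ℂ) * zeta5 ^ (j : ℕ)) = a := by
  have h : (∑ j : Fin 4, (a j : ℂ) * zeta5 ^ (j : ℕ)) ∈ Zzeta5 := ⟨a, rfl⟩
  rw [coeffs, dif_pos h]
  exact sum_mul_zeta5_pow_injective h.choose_spec.symm

lemma mem_Zzeta5_iff {z : ℂ} : z ∈ Zzeta5 ↔ ∃ p : ℤ[X], aeval zeta5 p = z := by
  constructor
  · rintro ⟨a, rfl⟩
    exact ⟨∑ j : Fin 4, C (a j) * X ^ (j : ℕ), by simp⟩
  · rintro ⟨p, rfl⟩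
    refine ⟨fun j => (p %ₘ cyclotomic 5 ℤ).coeff j, ?_⟩
    rw [← aeval_modByMonic_eq_self_of_root aeval_zeta5_cyclotomic_five,
      aeval_eq_sum_coeff_mul_pow (natDegree_modByMonic_cyclotomic_five_lt p)]

lemma starMap_aeval (p : ℤ[X]) :
    starMap (aeval zeta5 p) = (aeval (zeta5 ^ 2) p, aeval (1 : ZMod 5) p) := by
  have hr := natDegree_modByMonic_cyclotomic_five_lt p
  have hζ2 :=
    aeval_cyclotomic_eq_zero (by norm_num) (isPrimitiveRoot_zeta5.pow_of_coprime 2 (by norm_num))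
  -- `Φ₅` vanishes at `ζ₅²`, and at `1` in `ZMod 5` because `Φ₅(1) = 5`.
  rw [← aeval_modByMonic_eq_self_of_root aeval_zeta5_cyclotomic_five,
    ← aeval_modByMonic_eq_self_of_root hζ2,
    ← aeval_modByMonic_eq_self_of_root aeval_one_cyclotomic_five,
    aeval_eq_sum_coeff_mul_pow hr, aeval_eq_sum_coeff_mul_pow hr, aeval_eq_sum_coeff_mul_pow hr,
    starMap, coeffs_sum_mul_zeta5_pow]
  simp [pow_mul]

lemma zeta5_pow_five : zeta5 ^ 5 = 1 := isPrimitiveRoot_zeta5.pow_eq_one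

lemma zeta5_pow_eq_exp (k : ℕ) : zeta5 ^ k = exp ((2 * π * k / 5 : ℝ) * I) := by
  rw [zeta5, ← Complex.exp_nat_mul]
  push_cast
  ring_nf

lemma conj_zeta5 : conj zeta5 = zeta5 ^ 4 := by
  rw [← Complex.inv_eq_conj (isPrimitiveRoot_zeta5.norm'_eq_one (by norm_num))]
  exact inv_eq_of_mul_eq_one_left (by rw [← pow_succ, zeta5_pow_five])

lemma zeta5_add_zeta5_pow_four : zeta5 + zeta5 ^ 4 = (2 * Real.cos (2 * π / 5) : ℝ) := by
  rw [← conj_zeta5, Complex.add_conj, ← pow_one zeta5, zeta5_pow_eq_exp, exp_ofReal_mul_I_re]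
  norm_num

lemma zeta5_sub_zeta5_pow_four : zeta5 - zeta5 ^ 4 = (2 * Real.sin (2 * π / 5) : ℝ) * I := by
  rw [← conj_zeta5, Complex.sub_conj, ← pow_one zeta5, zeta5_pow_eq_exp, exp_ofReal_mul_I_im]
  norm_num

lemma zeta5_sq_add_zeta5_pow_three : zeta5 ^ 2 + zeta5 ^ 3 = (2 * Real.cos (4 * π / 5) : ℝ) := by
  have h : zeta5 ^ 3 = conj (zeta5 ^ 2) := by
    rw [map_pow, conj_zeta5]
    linear_combination (-zeta5 ^ 3) * zeta5_pow_five
  rw [h, Complex.add_conj, zeta5_pow_eq_exp, exp_ofReal_mul_I_re]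
  ring_nf

lemma cos_two_pi_div_five_pos : 0 < Real.cos (2 * π / 5) :=
  Real.cos_pos_of_mem_Ioo ⟨by linarith [pi_pos], by linarith [pi_pos]⟩

lemma cos_two_pi_div_five_lt : Real.cos (2 * π / 5) < 1 / 2 := by
  rw [← Real.cos_pi_div_three]
  exact Real.cos_lt_cos_of_nonneg_of_le_pi (by positivity) (by linarith [pi_pos])
    (by linarith [pi_pos])

lemma sin_two_pi_div_five_pos : 0 < Real.sin (2 * π / 5) :=
  Real.sin_pos_of_pos_of_lt_pi (by positivity) (by linarith [pi_pos])

lemma cos_four_pi_div_five_neg : Real.cos (4 * π / 5) < 0 :=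
  Real.cos_neg_of_pi_div_two_lt_of_lt (by linarith [pi_pos]) (by linarith [pi_pos])

lemma exists_int_lattice_point_near (x : ℂ) {h s : ℝ} (hh : 0 < h) (hs : 0 < s) :
    ∃ a c : ℤ, ‖x - h * (a + c * (s * I))‖ < h * (1 + s) := by
  refine ⟨⌊x.re / h⌋, ⌊x.im / (h * s)⌋, ?_⟩
  have hre := Int.sub_floor_div_mul_lt x.re hh
  have hre' := Int.sub_floor_div_mul_nonneg x.re hh
  have him := Int.sub_floor_div_mul_lt x.im (mul_pos hh hs)
  have him' := Int.sub_floor_div_mul_nonneg x.im (mul_pos hh hs)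
  calc ‖x - h * (⌊x.re / h⌋ + ⌊x.im / (h * s)⌋ * (s * I))‖
      ≤ |x.re - ⌊x.re / h⌋ * h| + |x.im - ⌊x.im / (h * s)⌋ * (h * s)| := by
        refine (norm_le_abs_re_add_abs_im _).trans_eq ?_
        simp only [sub_re, sub_im, mul_re, mul_im, add_re, add_im, ofReal_re, ofReal_im,
          intCast_re, intCast_im, I_re, I_im]
        ring_nf
    _ < h + h * s := by
        rw [abs_of_nonneg hre', abs_of_nonneg him']
        exact add_lt_add hre him
    _ = h * (1 + s) := by ring

lemma exists_aeval_zeta5_sq_near (x : ℂ) {ε : ℝ} (hε : 0 < ε) :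
    ∃ p : ℤ[X], aeval (1 : ZMod 5) p = 1 ∧ ‖aeval (zeta5 ^ 2) p - x‖ < ε := by
  set β := 2 * Real.cos (2 * π / 5)
  set s := 2 * Real.sin (2 * π / 5)
  have hβ : 0 < β := by positivity [cos_two_pi_div_five_pos]
  have hs : 0 < s := by positivity [sin_two_pi_div_five_pos]
  obtain ⟨n, hn⟩ := exists_pow_lt_of_lt_one (show 0 < ε / (5 * (1 + s)) by positivity)
    (show β < 1 by linarith [cos_two_pi_div_five_lt])
  obtain ⟨a, c, hac⟩ := exists_int_lattice_point_near ((x - 1) / 5) (pow_pos hβ n) hs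
  refine ⟨1 + 5 * (X ^ 2 + X ^ 3) ^ n * (C a + C c * (X ^ 3 - X ^ 2)), ?_, ?_⟩
  · simp only [map_add, map_mul, map_one, map_ofNat]
    rw [show (5 : ZMod 5) = 0 from rfl, zero_mul, zero_mul, add_zero]
  · have hζβ : (zeta5 ^ 2) ^ 2 + (zeta5 ^ 2) ^ 3 = (β : ℂ) := by
      rw [← zeta5_add_zeta5_pow_four]; linear_combination zeta5 * zeta5_pow_five
    have hζs : (zeta5 ^ 2) ^ 3 - (zeta5 ^ 2) ^ 2 = (s : ℂ) * I := by
      rw [← zeta5_sub_zeta5_pow_four]; linear_combination zeta5 * zeta5_pow_five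
    have heq : aeval (zeta5 ^ 2) (1 + 5 * (X ^ 2 + X ^ 3) ^ n * (C a + C c * (X ^ 3 - X ^ 2)))
        - x = -5 * ((x - 1) / 5 - ((β ^ n : ℝ) : ℂ) * (a + c * (s * I))) := by
      simp only [map_add, map_mul, map_pow, map_sub, map_one, map_ofNat, aeval_X, hζβ, hζs,
        eq_intCast, map_intCast]
      push_cast
      ring
    rw [heq, norm_mul]
    calc ‖(-5 : ℂ)‖ * ‖(x - 1) / 5 - ((β ^ n : ℝ) : ℂ) * (a + c * (s * I))‖
        < 5 * (β ^ n * (1 + s)) := by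
          rw [show ‖(-5 : ℂ)‖ = 5 by norm_num]
          exact mul_lt_mul_of_pos_left hac (by norm_num)
      _ < ε := by
          rw [lt_div_iff₀ (by positivity)] at hn
          linarith

lemma interior_pent_nonempty : (interior pent).Nonempty := by
  have hroot : ∀ k : ℕ, zeta5 ^ k ∈ {z : ℂ | z ^ 5 = 1} := fun k => by
    show (zeta5 ^ k) ^ 5 = 1
    rw [← pow_mul, mul_comm, pow_mul, zeta5_pow_five, one_pow]
  have h1 : (1 : ℂ) ∈ {z : ℂ | z ^ 5 = 1} := by simp
  rw [pent, interior_convexHull_nonempty_iff_affineSpan_eq_top,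
    AffineSubspace.affineSpan_eq_top_iff_vectorSpan_eq_top_of_nonempty ℝ ℂ ℂ ⟨1, h1⟩,
    eq_top_iff, ← RCLike.span_one_I, Submodule.span_le, Set.insert_subset_iff,
    Set.singleton_subset_iff]
  have hv : ∀ k : ℕ, zeta5 ^ k - 1 ∈ vectorSpan ℝ {z : ℂ | z ^ 5 = 1} :=
    fun k => vsub_mem_vectorSpan ℝ (hroot k) h1
  have hsum := Submodule.add_mem _ (hv 1) (hv 4)
  have hdiff := Submodule.sub_mem _ (hv 1) (hv 4)
  rw [show zeta5 ^ 1 - 1 + (zeta5 ^ 4 - 1) = (2 * Real.cos (2 * π / 5) - 2 : ℝ) • (1 : ℂ) by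
    rw [pow_one, real_smul, mul_one, ofReal_sub, ← zeta5_add_zeta5_pow_four]; push_cast; ring]
    at hsum
  rw [show zeta5 ^ 1 - 1 - (zeta5 ^ 4 - 1) = (2 * Real.sin (2 * π / 5) : ℝ) • I by
    rw [pow_one, real_smul, ← zeta5_sub_zeta5_pow_four]; ring] at hdiff
  constructor
  · exact (Submodule.smul_mem_iff _ (by linarith [cos_two_pi_div_five_lt])).1 hsum
  · exact (Submodule.smul_mem_iff _ (by linarith [sin_two_pi_div_five_pos])).1 hdiff

lemma mem_LambdaPu_of_aeval {u : ℂ} {p : ℤ[X]} (h1 : aeval (1 : ZMod 5) p = 1)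
    (hpent : aeval (zeta5 ^ 2) p - u ∈ pent) : aeval zeta5 p ∈ LambdaPu u :=
  ⟨mem_Zzeta5_iff.2 ⟨p, rfl⟩, (aeval (zeta5 ^ 2) p - u, 1), Or.inl (Or.inl (Or.inl ⟨hpent, rfl⟩)),
    by rw [starMap_aeval, h1]; simp⟩

lemma aeval_add_sum_mem_LambdaPu {u q : ℂ} {r : ℝ} (hball : Metric.ball q r ⊆ pent) {p₀ : ℤ[X]}
    (h₀ : aeval (1 : ZMod 5) p₀ = 1) (hp₀ : ‖aeval (zeta5 ^ 2) p₀ - (u + q)‖ < r / 2)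
    {ι : Type*} (S : Finset ι) {W : ι → ℤ[X]} (hW : ∀ i, aeval (1 : ZMod 5) (W i) = 0)
    (hWsmall : ∑ i ∈ S, ‖aeval (zeta5 ^ 2) (W i)‖ < r / 2) :
    aeval zeta5 (p₀ + ∑ i ∈ S, W i) ∈ LambdaPu u := by
  refine mem_LambdaPu_of_aeval (by simp [h₀, hW]) (hball ?_)
  rw [Metric.mem_ball, Complex.dist_eq, map_add, map_sum,
    show ∀ a b : ℂ, a + b - u - q = (a - (u + q)) + b from fun a b => by ring]
  exact (norm_add_le _ _).trans_lt <| by linarith [norm_sum_le S fun i => aeval (zeta5 ^ 2) (W i)]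

section Inflation

variable (m n : ℕ) (p : ℤ[X])

lemma aeval_zeta5_inflation :
    aeval zeta5 (5 * (m : ℤ[X]) * (X ^ 2 + X ^ 3) ^ n * p)
      = ((5 * m * (2 * Real.cos (4 * π / 5)) ^ n : ℝ) : ℂ) * aeval zeta5 p := by
  simp only [map_mul, map_pow, map_add, map_ofNat, map_natCast, aeval_X,
    zeta5_sq_add_zeta5_pow_three]
  push_cast
  ring

lemma aeval_zeta5_sq_inflation :
    aeval (zeta5 ^ 2) (5 * (m : ℤ[X]) * (X ^ 2 + X ^ 3) ^ n * p)
      = ((5 * m * (2 * Real.cos (2 * π / 5)) ^ n : ℝ) : ℂ) * aeval (zeta5 ^ 2) p := by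
  have h : (zeta5 ^ 2) ^ 2 + (zeta5 ^ 2) ^ 3 = (2 * Real.cos (2 * π / 5) : ℝ) := by
    rw [← zeta5_add_zeta5_pow_four]; linear_combination zeta5 * zeta5_pow_five
  simp only [map_mul, map_pow, map_add, map_ofNat, map_natCast, aeval_X, h]
  push_cast
  ring

lemma aeval_one_inflation : aeval (1 : ZMod 5) (5 * (m : ℤ[X]) * (X ^ 2 + X ^ 3) ^ n * p) = 0 := by
  simp only [map_mul, map_ofNat]
  rw [show (5 : ZMod 5) = 0 from rfl, zero_mul, zero_mul, zero_mul]

end Inflation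

lemma exists_switching_family (u : ℂ) {d : ℕ} (dir : Fin d → ℂ)
    (hdir : ∀ i, IsZ5Direction (dir i)) :
    ∃ z₀ : ℂ, ∃ w : Fin d → ℂ, (∀ i, ∑ j ∈ Iio i, ‖w j‖ < ‖w i‖) ∧
      (∀ i, ∃ c : ℝ, w i = c • dir i) ∧ ∀ S : Finset (Fin d), z₀ + ∑ i ∈ S, w i ∈ LambdaPu u := by
  choose v hv hv0 hpar using hdir
  choose ρ hρ using fun i => (hpar i).imp fun _ h => h.2
  choose p hp using fun i => mem_Zzeta5_iff.1 (hv i)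
  obtain ⟨M, hM⟩ := exists_nat_superincreasing fun i => norm_pos_iff.2 (hv0 i)
  obtain ⟨q, hq⟩ := interior_pent_nonempty
  obtain ⟨r, hr, hball⟩ := Metric.isOpen_iff.1 isOpen_interior q hq
  set β := 2 * Real.cos (2 * π / 5)
  set γ := 2 * Real.cos (4 * π / 5)
  have hβ : 0 < β := by positivity [cos_two_pi_div_five_pos]
  have hγ : 0 < |γ| := abs_pos.2 (by linarith [cos_four_pi_div_five_neg])
  set C := ∑ i, 5 * (M i : ℝ) * ‖aeval (zeta5 ^ 2) (p i)‖
  obtain ⟨n, hn⟩ := exists_pow_lt_of_lt_one (show 0 < r / 2 / (C + 1) by positivity)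
    (show β < 1 by linarith [cos_two_pi_div_five_lt])
  obtain ⟨p₀, hp₀1, hp₀⟩ := exists_aeval_zeta5_sq_near (u + q) (half_pos hr)
  set W : Fin d → ℤ[X] := fun i => 5 * (M i : ℤ[X]) * (X ^ 2 + X ^ 3) ^ n * p i
  refine ⟨aeval zeta5 p₀, fun i => aeval zeta5 (W i), fun i => ?_, fun i => ?_, fun S => ?_⟩
  · have hnorm : ∀ j, ‖aeval zeta5 (W j)‖ = 5 * |γ| ^ n * (M j * ‖v j‖) := fun j => by
      rw [aeval_zeta5_inflation, hp, norm_mul, norm_real, Real.norm_eq_abs, abs_mul, abs_mul,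
        abs_pow, Nat.abs_cast, abs_of_pos (by norm_num : (0 : ℝ) < 5)]
      ring
    simp only [hnorm, ← mul_sum]
    exact mul_lt_mul_of_pos_left (hM i) (by positivity)
  · refine ⟨5 * M i * γ ^ n * ρ i, ?_⟩
    simp only [W]
    rw [aeval_zeta5_inflation, hp, hρ, real_smul, real_smul]
    push_cast [γ]
    ring
  · rw [← map_sum, ← map_add]
    refine aeval_add_sum_mem_LambdaPu (hball.trans interior_subset) hp₀1 hp₀ S
      (fun i => aeval_one_inflation _ _ _) ?_
    calc ∑ i ∈ S, ‖aeval (zeta5 ^ 2) (W i)‖ ≤ ∑ i, ‖aeval (zeta5 ^ 2) (W i)‖ :=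
        sum_le_sum_of_subset_of_nonneg (subset_univ S) fun _ _ _ => norm_nonneg _
      _ = β ^ n * C := by
        rw [mul_sum]
        refine sum_congr rfl fun i _ => ?_
        rw [aeval_zeta5_sq_inflation, norm_mul, norm_real, Real.norm_of_nonneg (by positivity)]
        ring
      _ < r / 2 := by
        rw [lt_div_iff₀ (by positivity)] at hn
        nlinarith [pow_pos hβ n]

lemma add_smul_mem_line_iff (u p x : ℂ) (c : ℝ) : x + c • u ∈ line u p ↔ x ∈ line u p := by
  constructor
  · rintro ⟨s, hs⟩
    exact ⟨s - c, by rw [sub_smul]; linear_combination hs⟩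
  · rintro ⟨s, rfl⟩
    exact ⟨s + c, by rw [add_smul, add_assoc]⟩

lemma add_mem_line_iff (u p a x : ℂ) : a + x ∈ line u p ↔ x ∈ line u (p - a) := by
  constructor
  · rintro ⟨s, hs⟩
    exact ⟨s, by linear_combination hs⟩
  · rintro ⟨s, hs⟩
    exact ⟨s, by linear_combination hs⟩

lemma Xray_image_add (u a : ℂ) (F : Set ℂ) :
    Xray u ((a + ·) '' F) = fun p => Xray u F (p - a) := by
  funext p
  rw [Xray, Xray, ← Set.image_inter_preimage,
    Set.ncard_image_of_injective _ (add_right_injective a)]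
  congr 2
  ext x
  exact add_mem_line_iff u p a x

lemma Xray_subsetSums_even_eq_odd {ι : Type*} [DecidableEq ι] {w : ι → ℂ}
    (hw : Function.Injective fun S : Finset ι => ∑ i ∈ S, w i) {u : ℂ} {i : ι} {c : ℝ}
    (hi : w i = c • u) : Xray u (subsetSums w Even) = Xray u (subsetSums w Odd) :=
  funext fun p => ncard_subsetSums_even_inter_eq hw i fun x => hi ▸ add_smul_mem_line_iff u p x c

theorem bounded_card_not_determined_by_log_xrays_general (Λ : Set ℂ) (hΛ : IsPMS Λ) (k : ℕ)
    (hk : 1 ≤ k) (U : Finset ℂ) (hcard : U.card = 1 + Nat.log 2 k)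
    (hUdir : ∀ u ∈ U, ‖u‖ = 1 ∧ IsZ5Direction u) :
    ∃ F F' : Set ℂ, F ⊆ Λ ∧ F.Finite ∧ F.ncard ≤ k ∧ F' ⊆ Λ ∧ F'.Finite ∧ F'.ncard ≤ k ∧
      F ≠ F' ∧ ∀ u ∈ U, Xray u F = Xray u F' := by
  obtain ⟨t, u, -, rfl⟩ := hΛ
  have : Nonempty (Fin U.card) := ⟨⟨0, by omega⟩⟩
  obtain ⟨z₀, w, hsup, hpar, hmem⟩ := exists_switching_family u (fun i => U.equivFin.symm i)
    fun i => (hUdir _ (U.equivFin.symm i).2).2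
  have hinj := sum_injective_of_superincreasing hsup
  have hsub : ∀ P, (t + z₀ + ·) '' subsetSums w P ⊆ (t + ·) '' LambdaPu u := by
    rintro P _ ⟨_, ⟨S, -, rfl⟩, rfl⟩
    exact ⟨_, hmem S, (add_assoc _ _ _).symm⟩
  have hfin : ∀ P, ((t + z₀ + ·) '' subsetSums w P).Finite := fun P =>
    (finite_subsetSums w P).image _
  have hcard_le : ∀ P, ((t + z₀ + ·) '' subsetSums w P).ncard
      ≤ {S : Finset (Fin U.card) | P S.card}.ncard :=
    fun P => (Set.ncard_image_le (finite_subsetSums w P)).trans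
      (Set.ncard_image_le (Set.toFinite _))
  have hk' : {S : Finset (Fin U.card) | Even S.card}.ncard ≤ k := by
    rw [ncard_setOf_even_card, Fintype.card_fin, hcard, Nat.add_sub_cancel_left]
    exact Nat.pow_log_le_self 2 (by omega)
  refine ⟨_, _, hsub Even, hfin Even, (hcard_le Even).trans hk', hsub Odd, hfin Odd,
    (hcard_le Odd).trans (ncard_setOf_even_card_eq_odd (ι := Fin U.card) ▸ hk'), fun hF => ?_,
    fun v hv => ?_⟩
  · have h := Set.image_injective.2 (add_right_injective (t + z₀)) hF
    exact zero_notMem_subsetSums_odd hinj (h ▸ zero_mem_subsetSums_even w)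
  · obtain ⟨c, hc⟩ := hpar (U.equivFin ⟨v, hv⟩)
    rw [Equiv.symm_apply_apply] at hc
    rw [Xray_image_add, Xray_image_add, Xray_subsetSums_even_eq_odd hinj hc]

theorem bounded_card_not_determined_by_log_xrays (Λ : Set ℂ) (hΛ : IsPMS Λ) (k : ℕ)
    (hk : 1 ≤ k) (U : Finset ℂ) (hcard : U.card = 1 + Nat.log 2 k)
    (hUdir : ∀ u ∈ U, ‖u‖ = 1 ∧ IsZ5Direction u)
    (hUpar : (U : Set ℂ).Pairwise fun u v => ¬ Par u v) :
    ∃ F F' : Set ℂ, F ⊆ Λ ∧ F.Finite ∧ F.ncard ≤ k ∧ F' ⊆ Λ ∧ F'.Finite ∧ F'.ncard ≤ k ∧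
      F ≠ F' ∧ ∀ u ∈ U, Xray u F = Xray u F' :=
  bounded_card_not_determined_by_log_xrays_general Λ hΛ k hk U hcard hUdir

end
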